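/- Let H be a subgyrogroup of a gyrogroup G. Then the collection of left cosets G/H = {a ⊕ H : a ∈ G} is an invariant set of the geometry (G, Γ_m) (i.e., T(X) ∈ G/H for every X ∈ G/H and T ∈ Γ_m) if and only if H is strong in G, meaning gyr[a,b](H) = H for all a, b ∈ G. -/

import Mathlib

/-- A gyrogroup: a set with a binary operation `op`, a left identity `e`, left inverses
`inv`, and gyroautomorphisms `gyr a b` (bijective and operation-preserving) satisfying the
left gyroassociative law and the left loop property. -/
class Gyrogroup (G : Type*) where
  /-- the gyrogroup operation `⊕` -/
  op : G → G → G
  /-- the identity element -/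
  e : G
  /-- the inverse `⊖a` -/
  inv : G → G
  /-- (G1) `e ⊕ a = a` -/
  op_e : ∀ a : G, op e a = a
  /-- (G2) `⊖a ⊕ a = e` -/
  op_inv : ∀ a : G, op (inv a) a = e
  /-- the gyroautomorphism `gyr[a, b]` -/
  gyr : G → G → G → G
  /-- (G3) `gyr[a, b]` is bijective -/
  gyr_bijective : ∀ a b : G, Function.Bijective (gyr a b)
  /-- (G3) `gyr[a, b]` preserves the operation -/
  gyr_op : ∀ a b x y : G, gyr a b (op x y) = op (gyr a b x) (gyr a b y)
  /-- (G3) the left gyroassociative law -/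
  gyrassoc : ∀ a b c : G, op a (op b c) = op (op a b) (gyr a b c)
  /-- (G4) the left loop property -/
  loop : ∀ a b : G, gyr (op a b) b = gyr a b

namespace Gyrogroup

variable {G : Type*} [Gyrogroup G]

theorem key (x z : G) : op (inv x) (op x z) = gyr (inv x) x z := by
  rw [gyrassoc, op_inv, op_e]

theorem L_injective (x : G) : Function.Injective (op x) := by
  intro z₁ z₂ h
  have h1 : gyr (inv x) x z₁ = gyr (inv x) x z₂ := by
    rw [← key, ← key, h]
  exact (gyr_bijective (inv x) x).1 h1

theorem L_surjective (x : G) : Function.Surjective (op x) := by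
  intro w
  obtain ⟨z, hz⟩ := (gyr_bijective (inv x) x).2 (op (inv x) w)
  exact ⟨z, L_injective (inv x) (by rw [key, hz])⟩

theorem L_bijective (x : G) : Function.Bijective (op x) :=
  ⟨L_injective x, L_surjective x⟩

/-- The left gyrotranslation `L_a : x ↦ a ⊕ x` as a permutation of `G`. -/
noncomputable def Lperm (a : G) : Equiv.Perm G := Equiv.ofBijective (op a) (L_bijective a)

/-- The gyroautomorphism `gyr[a, b]` as a permutation of `G`. -/
noncomputable def gyrPerm (a b : G) : Equiv.Perm G := Equiv.ofBijective (gyr a b) (gyr_bijective a b)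

/-- `GYR(G)`: the subgroup of `Sym(G)` generated by all gyroautomorphisms. -/
def GYR (G : Type*) [Gyrogroup G] : Subgroup (Equiv.Perm G) :=
  Subgroup.closure {π : Equiv.Perm G | ∃ a b : G, π = gyrPerm a b}

/-- `Γₘ = {L_a ∘ γ : a ∈ G, γ ∈ GYR(G)}`, a subgroup of `Sym(G)`. -/
def Γm (G : Type*) [Gyrogroup G] : Set (Equiv.Perm G) :=
  {T : Equiv.Perm G | ∃ a : G, ∃ γ ∈ GYR G, T = Lperm a * γ}

end Gyrogroup

/-- A set of figures is invariant if it is closed under all transformations of the geometry. -/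
def IsInvariantSet {S : Type*} (𝒯 : Set (Equiv.Perm S)) (𝒞 : Set (Set S)) : Prop :=
  ∀ F ∈ 𝒞, ∀ t ∈ 𝒯, ⇑t '' F ∈ 𝒞

/-- An invariant set is minimally invariant if it contains no nonempty proper invariant
subset. -/
def IsMinimallyInvariantSet {S : Type*} (𝒯 : Set (Equiv.Perm S)) (𝒞 : Set (Set S)) : Prop :=
  IsInvariantSet 𝒯 𝒞 ∧ ∀ 𝒟 ⊆ 𝒞, IsInvariantSet 𝒯 𝒟 → 𝒟.Nonempty → 𝒟 = 𝒞

/-- `H` is a subgyrogroup of the gyrogroup `G`: it is nonempty, closed under the gyrogroup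
operation and inverses (hence a gyrogroup under the operation of `G`), and
`gyr[a,b](H) = H` for all `a, b ∈ H`. -/
def IsSubgyrogroup {G : Type*} [Gyrogroup G] (H : Set G) : Prop :=
  H.Nonempty ∧ (∀ a ∈ H, ∀ b ∈ H, Gyrogroup.op a b ∈ H) ∧
    (∀ a ∈ H, Gyrogroup.inv a ∈ H) ∧
    ∀ a ∈ H, ∀ b ∈ H, Gyrogroup.gyr a b '' H = H

/-!
A gyroautomorphism fixes `e`, so if `gyr[a,b](H)` is a coset `c ⊕ H` then it contains `e`,
which forces `c ∈ H` and hence `c ⊕ H = H`. Conversely, if every `gyr[a,b]` preserves `H` then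
so does every element `γ` of `GYR(G)`, and since `γ` is an automorphism it maps `b ⊕ H` to
`γ b ⊕ H`; left gyroassociativity then gives `a ⊕ (c ⊕ H) = (a ⊕ c) ⊕ gyr[a,c](H) = (a ⊕ c) ⊕ H`.
-/

open scoped Pointwise

namespace Gyrogroup

variable {G : Type*} [Gyrogroup G]

theorem gyr_e_left (b c : G) : gyr e b c = c := by
  have h := gyrassoc e b c
  rw [op_e, op_e] at h
  exact (L_injective b h).symm

theorem inv_op_cancel_left (a z : G) : op (inv a) (op a z) = z := by
  have h : gyr (inv a) a = gyr e a := by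
    conv_rhs => rw [← op_inv a, loop]
  rw [key, h, gyr_e_left]

theorem op_e_right (a : G) : op a e = a :=
  L_injective (inv a) (by rw [inv_op_cancel_left, op_inv])

theorem op_inv_right (a : G) : op a (inv a) = e :=
  L_injective (inv a) (by rw [inv_op_cancel_left, op_e_right])

theorem inv_inv (a : G) : inv (inv a) = a := by
  simpa only [op_inv, op_e_right] using inv_op_cancel_left (inv a) a

theorem eq_inv_of_op_eq_e {c h : G} (hch : op c h = e) : c = inv h := by
  have hh : h = inv c := by
    simpa only [hch, op_e_right] using (inv_op_cancel_left c h).symm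
  rw [hh, inv_inv]

theorem gyr_apply_e (a b : G) : gyr a b e = e := by
  have h := gyr_op a b e e
  rw [op_e] at h
  exact L_injective (gyr a b e) (by rw [← h, op_e_right])

theorem op_image_op_image {H : Set G} {a c : G} (hac : gyr a c '' H = H) :
    op a '' (op c '' H) = op (op a c) '' H := by
  conv_rhs => rw [← hac]
  simp only [Set.image_image, gyrassoc]

theorem image_op_e (s : Set G) : op e '' s = s := by
  simp only [op_e, Set.image_id']

theorem coe_Lperm (a : G) : ⇑(Lperm a) = op a :=
  rfl

theorem Lperm_e : Lperm (e : G) = 1 :=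
  Equiv.ext op_e

variable (G) in
def autPerm : Subgroup (Equiv.Perm G) where
  carrier := {π | ∀ x y : G, π (op x y) = op (π x) (π y)}
  one_mem' _ _ := rfl
  mul_mem' {π₁ π₂} h₁ h₂ x y := (congrArg π₁ (h₂ x y)).trans (h₁ _ _)
  inv_mem' {π} h x y := π.injective <| by
    rw [h]
    simp only [Equiv.Perm.coe_inv, Equiv.apply_symm_apply]

theorem GYR_le_autPerm : GYR G ≤ autPerm G :=
  (Subgroup.closure_le _).2 fun _ ⟨a, b, hπ⟩ => hπ ▸ gyr_op a b

theorem GYR_le_stabilizer {H : Set G} (hst : ∀ a b : G, gyr a b '' H = H) :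
    GYR G ≤ MulAction.stabilizer (Equiv.Perm G) H :=
  (Subgroup.closure_le _).2 fun _ ⟨a, b, hπ⟩ => hπ ▸ MulAction.mem_stabilizer_iff.2 (hst a b)

theorem image_op_image_of_mem {H : Set G} {γ : Equiv.Perm G} (hγ : γ ∈ autPerm G)
    (hH : γ ∈ MulAction.stabilizer (Equiv.Perm G) H) (b : G) :
    ⇑γ '' (op b '' H) = op (γ b) '' H := by
  have hγH : ⇑γ '' H = H := MulAction.mem_stabilizer_iff.1 hH
  conv_rhs => rw [← hγH]
  simp only [Set.image_image, hγ b]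

end Gyrogroup

namespace IsSubgyrogroup

open Gyrogroup

variable {G : Type*} [Gyrogroup G] {H : Set G}

theorem e_mem (hH : IsSubgyrogroup H) : e ∈ H := by
  obtain ⟨h, hh⟩ := hH.1
  simpa only [op_inv] using hH.2.1 _ (hH.2.2.1 h hh) h hh

theorem op_image_self (hH : IsSubgyrogroup H) {c : G} (hc : c ∈ H) : op c '' H = H := by
  refine (Set.image_subset_iff.2 fun h hh => hH.2.1 c hc h hh).antisymm fun h hh => ?_
  have hinv : inv c ∈ H := hH.2.2.1 c hc
  -- `H = gyr[c, ⊖c](H)` and `c ⊕ (⊖c ⊕ h) = gyr[c, ⊖c] h`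
  obtain ⟨h', hh', rfl⟩ := (hH.2.2.2 c hc (inv c) hinv).symm ▸ hh
  exact ⟨op (inv c) h', hH.2.1 _ hinv _ hh', by rw [gyrassoc, op_inv_right, op_e]⟩

theorem coset_eq_self_of_e_mem (hH : IsSubgyrogroup H) {c : G} (he : e ∈ op c '' H) :
    op c '' H = H := by
  obtain ⟨h, hh, hch⟩ := he
  exact hH.op_image_self (eq_inv_of_op_eq_e hch ▸ hH.2.2.1 h hh)

end IsSubgyrogroup

open Gyrogroup in
/-- Let `H` be a subgyrogroup of a gyrogroup `G`. The coset space
`G/H = {a ⊕ H : a ∈ G}` is an invariant set of the geometry `(G, Γₘ)` if and only if `H` is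
strong in `G`, i.e. `gyr[a,b](H) = H` for all `a, b ∈ G`. -/
theorem stmt14 {G : Type*} [Gyrogroup G] (H : Set G) (hH : IsSubgyrogroup H) :
    IsInvariantSet (Γm G) {X : Set G | ∃ a : G, X = op a '' H} ↔
      ∀ a b : G, gyr a b '' H = H := by
  constructor
  · intro hinv a b
    have hT : gyrPerm a b ∈ Γm G :=
      ⟨e, gyrPerm a b, Subgroup.subset_closure ⟨a, b, rfl⟩, by rw [Lperm_e, one_mul]⟩
    obtain ⟨c, hc⟩ := hinv H ⟨e, (image_op_e H).symm⟩ _ hT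
    have he : e ∈ op c '' H := hc ▸ ⟨e, hH.e_mem, gyr_apply_e a b⟩
    exact hc.trans (hH.coset_eq_self_of_e_mem he)
  · rintro hst _ ⟨b, rfl⟩ _ ⟨a, γ, hγ, rfl⟩
    refine ⟨op a (γ b), ?_⟩
    rw [Equiv.Perm.coe_mul, coe_Lperm, Set.image_comp,
      image_op_image_of_mem (GYR_le_autPerm hγ) (GYR_le_stabilizer hst hγ),
      op_image_op_image (hst _ _)]
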